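/- arXiv:1601.00241 — 2 statements merged into one kernel-verified Lean document; each statement's English description precedes it below -/
import Mathlib

section
/- Let n ≥ 1 and let k ≥ 0 be an integer. Let s and s̃ be holomorphic functions on an open neighborhood of the closed polydisk Δⁿ(0,2) = {z ∈ ℂⁿ : |z_ℓ| ≤ 2 for ℓ = 1,…,n} such that s(z) = z₁^k · s̃(z) for all z. Then ∫_{Δⁿ(0,2)} |s̃(z)|² dm(z) ≤ ((k+1)/2^{2k}) ∫_{Δⁿ(0,2)} |s(z)|² dm(z). -/
/-!
Expand `f`, holomorphic near the disk `|w| ≤ r`, as `∑ cⱼ wʲ`. The monomials are orthogonal on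
the disk, so `∫ |w|^{2k} |f|² = ∑ |cⱼ|² π r^{2(j+k+1)} / (j+k+1)`, and comparing the cases `0` and
`k` term by term (using `j + k + 1 ≤ (k + 1)(j + 1)`) gives
`∫ |f|² ≤ (k + 1) r^{-2k} ∫ |wᵏ f|²`. On the polydisk, apply this to every slice in the first
variable and integrate over the others.
-/

open MeasureTheory Metric Set Complex
open scoped Real ComplexConjugate

section Disk

variable {r : ℝ}

/-- For `0 ≤ r`, `diskMoment r n = ∫_{|w| ≤ r} |w|^{2n} dm(w)`. -/
noncomputable def diskMoment (r : ℝ) (n : ℕ) : ℝ := π * r ^ (2 * (n + 1)) / (n + 1)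

theorem integral_Ioo_exp_int_mul_I_eq_zero {m : ℤ} (hm : m ≠ 0) :
    ∫ θ in Ioo (-π) π, exp (m * θ * I) = 0 := by
  have hc : (m : ℂ) * I ≠ 0 := mul_ne_zero (Int.cast_ne_zero.2 hm) I_ne_zero
  have hper : exp (m * I * π) = exp (m * I * (-π : ℝ)) :=
    exp_eq_exp_iff_exists_int.2 ⟨m, by push_cast; ring⟩
  simp_rw [mul_right_comm _ _ I]
  rw [← integral_Ioc_eq_integral_Ioo,
    ← intervalIntegral.integral_of_le (by linarith [Real.pi_pos]), integral_exp_mul_complex hc,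
    hper, sub_self, zero_div]

theorem setIntegral_closedBall_eq_polarCoord {E : Type*} [NormedAddCommGroup E]
    [NormedSpace ℝ E] (g : ℂ → E) :
    ∫ w in closedBall (0 : ℂ) r, g w =
      ∫ p in Ioc 0 r ×ˢ Ioo (-π) π, p.1 • g (Complex.polarCoord.symm p) := by
  have hS : Complex.polarCoord.target ∩ Complex.polarCoord.symm ⁻¹' closedBall 0 r =
      Ioc 0 r ×ˢ Ioo (-π) π := by
    ext ⟨ρ, θ⟩
    simp only [Complex.polarCoord_target, mem_inter_iff, mem_prod, mem_Ioi, mem_preimage,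
      mem_closedBall_zero_iff, norm_polarCoord_symm, mem_Ioc]
    constructor
    · rintro ⟨⟨h0, hθ⟩, hr⟩; exact ⟨⟨h0, by rwa [abs_of_pos h0] at hr⟩, hθ⟩
    · rintro ⟨⟨h0, hr⟩, hθ⟩; exact ⟨⟨h0, hθ⟩, by rwa [abs_of_pos h0]⟩
  have hcont : Continuous Complex.polarCoord.symm := by
    rw [funext Complex.polarCoord_symm_apply]; fun_prop
  rw [← integral_indicator measurableSet_closedBall, ← Complex.integral_comp_polarCoord_symm,
    ← hS, ← setIntegral_indicator]
  · congr 1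
    ext p
    by_cases hp : Complex.polarCoord.symm p ∈ closedBall 0 r
    · rw [indicator_of_mem hp, indicator_of_mem (mem_preimage.2 hp)]
    · rw [indicator_of_notMem hp, indicator_of_notMem (by exact hp), smul_zero]
  · exact hcont.measurable measurableSet_closedBall

theorem polarCoord_symm_pow_mul_conj_pow (p : ℝ × ℝ) (a b : ℕ) :
    Complex.polarCoord.symm p ^ a * conj (Complex.polarCoord.symm p) ^ b =
      (p.1 : ℂ) ^ (a + b) * exp (((a - b : ℤ) : ℂ) * p.2 * I) := by
  have hp : Complex.polarCoord.symm p = p.1 * exp (p.2 * I) := by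
    rw [Complex.polarCoord_symm_apply, exp_mul_I]; push_cast; ring
  have hconj : conj (exp (p.2 * I)) = exp (-(p.2 * I)) := by
    rw [← exp_conj, map_mul, conj_ofReal, conj_I, mul_neg]
  rw [hp, map_mul, conj_ofReal, hconj, mul_pow, mul_pow, ← exp_nat_mul, ← exp_nat_mul]
  rw [show ((a - b : ℤ) : ℂ) * p.2 * I = a * (p.2 * I) + b * -(p.2 * I) by push_cast; ring,
    exp_add]
  ring

theorem integral_Ioc_ofReal_pow (hr : 0 ≤ r) (n : ℕ) :
    ∫ ρ in Ioc 0 r, (ρ : ℂ) ^ n = ((r ^ (n + 1) / (n + 1) : ℝ) : ℂ) := by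
  simp_rw [← ofReal_pow]
  rw [integral_complex_ofReal, ← intervalIntegral.integral_of_le hr, integral_pow]
  simp

theorem integral_closedBall_pow_mul_conj_pow (hr : 0 ≤ r) (a b : ℕ) :
    ∫ w in closedBall (0 : ℂ) r, w ^ a * conj w ^ b =
      if a = b then (diskMoment r a : ℂ) else 0 := by
  simp_rw [setIntegral_closedBall_eq_polarCoord, polarCoord_symm_pow_mul_conj_pow, real_smul,
    ← mul_assoc, ← pow_succ']
  rw [Measure.volume_eq_prod, setIntegral_prod_mul (fun ρ : ℝ => (ρ : ℂ) ^ (a + b + 1))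
    (fun θ : ℝ => exp (((a - b : ℤ) : ℂ) * θ * I))]
  split_ifs with hab
  · subst hab
    simp only [sub_self, Int.cast_zero, zero_mul, exp_zero, integral_const,
      integral_Ioc_ofReal_pow hr]
    rw [measureReal_restrict_apply_univ, Real.volume_real_Ioo_of_le (by linarith [Real.pi_pos]),
      show a + a + 1 + 1 = 2 * (a + 1) by ring, real_smul, mul_one, ← ofReal_mul, diskMoment]
    congr 1
    push_cast
    field_simp
    ring
  · rw [integral_Ioo_exp_int_mul_I_eq_zero (by omega), mul_zero]

theorem integral_closedBall_norm_pow_mul_sum_sq (hr : 0 ≤ r) (k : ℕ) (c : ℕ → ℂ)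
    (s : Finset ℕ) :
    ∫ w in closedBall (0 : ℂ) r, ‖w ^ k * ∑ j ∈ s, c j * w ^ j‖ ^ 2 =
      ∑ j ∈ s, ‖c j‖ ^ 2 * diskMoment r (j + k) := by
  have hexpand : ∀ w : ℂ, ((‖w ^ k * ∑ j ∈ s, c j * w ^ j‖ ^ 2 : ℝ) : ℂ) =
      ∑ j ∈ s, ∑ l ∈ s, c j * conj (c l) * (w ^ (j + k) * conj w ^ (l + k)) := by
    intro w
    rw [ofReal_pow, ← mul_conj', Finset.mul_sum, map_sum, Finset.sum_mul_sum]
    refine Finset.sum_congr rfl fun j _ => Finset.sum_congr rfl fun l _ => ?_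
    simp only [map_mul, map_pow]
    ring
  have hint : ∀ a b : ℕ, Integrable (fun w : ℂ => w ^ a * conj w ^ b)
      (volume.restrict (closedBall 0 r)) := fun a b =>
    ((continuous_pow a).mul (continuous_conj.pow b)).continuousOn.integrableOn_compact
      (isCompact_closedBall 0 r)
  apply ofReal_injective
  rw [← integral_complex_ofReal]
  simp_rw [hexpand]
  rw [integral_finsetSum _ fun j _ =>
    integrable_finsetSum _ fun l _ => (hint _ _).const_mul _]
  push_cast
  refine Finset.sum_congr rfl fun j hj => ?_
  rw [integral_finsetSum _ fun l _ => (hint _ _).const_mul _]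
  simp_rw [integral_const_mul, integral_closedBall_pow_mul_conj_pow hr, add_left_inj, mul_ite,
    mul_zero, Finset.sum_ite_eq, if_pos hj, mul_conj']

theorem norm_sum_mul_pow_le_tsum {c : ℕ → ℂ} (hc : Summable fun j => ‖c j‖ * r ^ j)
    {w : ℂ} (hw : ‖w‖ ≤ r) (s : Finset ℕ) :
    ‖∑ j ∈ s, c j * w ^ j‖ ≤ ∑' j, ‖c j‖ * r ^ j := by
  calc ‖∑ j ∈ s, c j * w ^ j‖ ≤ ∑ j ∈ s, ‖c j‖ * r ^ j :=
        (norm_sum_le _ _).trans <| Finset.sum_le_sum fun j _ => by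
          rw [norm_mul, norm_pow]; gcongr
    _ ≤ ∑' j, ‖c j‖ * r ^ j :=
        hc.sum_le_tsum _ fun j _ =>
          mul_nonneg (norm_nonneg _) (pow_nonneg ((norm_nonneg w).trans hw) j)

theorem hasSum_integral_closedBall_norm_pow_mul_sq (hr : 0 ≤ r) (k : ℕ) {f : ℂ → ℂ} {c : ℕ → ℂ}
    (hc : Summable fun j => ‖c j‖ * r ^ j)
    (hf : ∀ w ∈ closedBall (0 : ℂ) r, HasSum (fun j => c j * w ^ j) (f w)) :
    HasSum (fun j => ‖c j‖ ^ 2 * diskMoment r (j + k))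
      (∫ w in closedBall (0 : ℂ) r, ‖w ^ k * f w‖ ^ 2) := by
  rw [hasSum_iff_tendsto_nat_of_nonneg fun j => by unfold diskMoment; positivity]
  simp_rw [← integral_closedBall_norm_pow_mul_sum_sq hr]
  refine tendsto_integral_of_dominated_convergence
    (fun _ => (r ^ k * ∑' j, ‖c j‖ * r ^ j) ^ 2)
    (fun N => Continuous.aestronglyMeasurable (by fun_prop))
    (integrableOn_const measure_closedBall_lt_top.ne) (fun N => ?_) ?_
  · rw [ae_restrict_iff' measurableSet_closedBall]
    refine .of_forall fun w hw => ?_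
    rw [mem_closedBall_zero_iff] at hw
    rw [norm_pow, norm_norm, norm_mul, norm_pow]
    gcongr
    exact norm_sum_mul_pow_le_tsum hc hw _
  · rw [ae_restrict_iff' measurableSet_closedBall]
    exact .of_forall fun w hw =>
      ((tendsto_const_nhds.mul (hf w hw).tendsto_sum_nat).norm).pow 2

theorem exists_hasSum_mul_pow_of_differentiableOn (hr : 0 ≤ r) {f : ℂ → ℂ} {V : Set ℂ}
    (hV : IsOpen V) (hrV : closedBall 0 r ⊆ V) (hf : DifferentiableOn ℂ f V) :
    ∃ c : ℕ → ℂ, Summable (fun j => ‖c j‖ * r ^ j) ∧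
      ∀ w ∈ closedBall (0 : ℂ) r, HasSum (fun j => c j * w ^ j) (f w) := by
  obtain ⟨δ, hδ, hδV⟩ := (isCompact_closedBall (0 : ℂ) r).exists_cthickening_subset_open hV hrV
  rw [cthickening_closedBall hδ.le hr] at hδV
  lift r to NNReal using hr
  lift δ to NNReal using hδ.le
  have hrδ : r < δ + r := lt_add_of_pos_left r (mod_cast hδ)
  have hd : DifferentiableOn ℂ f (closedBall 0 (δ + r : NNReal)) := by
    rw [NNReal.coe_add]; exact hf.mono hδV
  have hp := hd.hasFPowerSeriesOnBall (hrδ.trans_le' bot_le)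
  have hrp := lt_of_lt_of_le (ENNReal.coe_lt_coe.2 hrδ) hp.r_le
  refine ⟨(cauchyPowerSeries f 0 (δ + r : NNReal)).coeff, ?_, fun w hw => ?_⟩
  · simpa only [FormalMultilinearSeries.norm_apply_eq_norm_coef] using
      (cauchyPowerSeries f 0 (δ + r : NNReal)).summable_norm_mul_pow hrp
  have hw' : w ∈ eball 0 (δ + r : NNReal) := by
    rw [mem_eball, edist_zero_right, enorm_eq_nnnorm, ENNReal.coe_lt_coe, ← NNReal.coe_lt_coe,
      coe_nnnorm]
    exact (mem_closedBall_zero_iff.1 hw).trans_lt hrδ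
  simpa only [FormalMultilinearSeries.apply_eq_pow_smul_coeff, smul_eq_mul, zero_add, mul_comm]
    using hp.hasSum hw'

theorem diskMoment_le (hr : 0 < r) (j k : ℕ) :
    diskMoment r j ≤ (k + 1) / r ^ (2 * k) * diskMoment r (j + k) := by
  have hjk : (j + k + 1 : ℝ) ≤ (k + 1) * (j + 1) := by
    nlinarith [j.cast_nonneg (α := ℝ), k.cast_nonneg (α := ℝ)]
  rw [diskMoment, diskMoment, show 2 * (j + k + 1) = 2 * (j + 1) + 2 * k by ring, pow_add,
    div_le_iff₀ (by positivity)]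
  push_cast
  field_simp
  gcongr

theorem integral_closedBall_norm_sq_le (hr : 0 < r) {f : ℂ → ℂ} {V : Set ℂ}
    (hV : IsOpen V) (hrV : closedBall 0 r ⊆ V) (hf : DifferentiableOn ℂ f V) (k : ℕ) :
    ∫ w in closedBall (0 : ℂ) r, ‖f w‖ ^ 2 ≤
      (k + 1) / r ^ (2 * k) * ∫ w in closedBall (0 : ℂ) r, ‖w ^ k * f w‖ ^ 2 := by
  obtain ⟨c, hc, hfc⟩ := exists_hasSum_mul_pow_of_differentiableOn hr.le hV hrV hf
  have h0 := hasSum_integral_closedBall_norm_pow_mul_sq hr.le 0 hc hfc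
  simp only [pow_zero, one_mul, add_zero] at h0
  refine hasSum_le (fun j => ?_) h0
    ((hasSum_integral_closedBall_norm_pow_mul_sq hr.le k hc hfc).mul_left _)
  rw [mul_left_comm]
  exact mul_le_mul_of_nonneg_left (diskMoment_le hr j k) (sq_nonneg _)

end Disk

theorem setOf_forall_norm_le_eq_closedBall {ι E : Type*} [Fintype ι] [SeminormedAddCommGroup E]
    {r : ℝ} (hr : 0 ≤ r) : {z : ι → E | ∀ i, ‖z i‖ ≤ r} = closedBall 0 r := by
  ext z
  simp [pi_norm_le_iff_of_nonneg hr]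

theorem Fin.cons_mem_closedBall_zero_iff {m : ℕ} {E : Type*} [SeminormedAddCommGroup E] {r : ℝ}
    (hr : 0 ≤ r) (w : E) (z : Fin m → E) :
    (Fin.cons w z : Fin (m + 1) → E) ∈ closedBall 0 r ↔
      w ∈ closedBall 0 r ∧ z ∈ closedBall 0 r := by
  simp only [mem_closedBall_zero_iff, pi_norm_le_iff_of_nonneg hr, Fin.forall_fin_succ,
    Fin.cons_zero, Fin.cons_succ]

section Slicing

variable {m : ℕ} {E : Type*} [NormedAddCommGroup E] [NormedSpace ℝ E] {r : ℝ}

theorem measurableEmbedding_finCons {α : Type*} [MeasurableSpace α] :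
    MeasurableEmbedding (fun p : α × (Fin m → α) => (Fin.cons p.1 p.2 : Fin (m + 1) → α)) := by
  convert (MeasurableEquiv.piFinSuccAbove (fun _ : Fin (m + 1) => α) 0).symm.measurableEmbedding
    using 1
  ext p : 1
  exact (Fin.insertNth_zero' _ _).symm

theorem measurePreserving_finCons_restrict_closedBall (hr : 0 ≤ r) :
    MeasurePreserving (fun p : ℂ × (Fin m → ℂ) => (Fin.cons p.1 p.2 : Fin (m + 1) → ℂ))
      ((volume.restrict (closedBall 0 r)).prod (volume.restrict (closedBall 0 r)))
      (volume.restrict (closedBall 0 r)) := by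
  have hcons := (volume_preserving_piFinSuccAbove (fun _ : Fin (m + 1) => ℂ) 0).symm
  rw [show ⇑(MeasurableEquiv.piFinSuccAbove (fun _ : Fin (m + 1) => ℂ) 0).symm =
    fun p => Fin.cons p.1 p.2 from funext fun p => Fin.insertNth_zero' p.1 p.2] at hcons
  have hpre : (fun p : ℂ × (Fin m → ℂ) => (Fin.cons p.1 p.2 : Fin (m + 1) → ℂ)) ⁻¹'
      closedBall 0 r = closedBall 0 r ×ˢ closedBall 0 r := by
    ext p
    exact Fin.cons_mem_closedBall_zero_iff hr p.1 p.2
  rw [Measure.prod_restrict, ← hpre]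
  exact hcons.restrict_preimage_emb measurableEmbedding_finCons _

theorem setIntegral_closedBall_fin_succ (hr : 0 ≤ r) {f : (Fin (m + 1) → ℂ) → E}
    (hf : IntegrableOn f (closedBall 0 r)) :
    ∫ z in closedBall 0 r, f z =
      ∫ z in closedBall (0 : Fin m → ℂ) r, ∫ w in closedBall (0 : ℂ) r, f (Fin.cons w z) := by
  have h := measurePreserving_finCons_restrict_closedBall (m := m) hr
  rw [← h.integral_comp measurableEmbedding_finCons]
  exact integral_prod_symm _ ((h.integrable_comp_emb measurableEmbedding_finCons).2 hf)

theorem setIntegral_closedBall_fin_succ_mono (hr : 0 ≤ r) {f g : (Fin (m + 1) → ℂ) → ℝ}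
    (hf : IntegrableOn f (closedBall 0 r)) (hg : IntegrableOn g (closedBall 0 r))
    (hfg : ∀ z ∈ closedBall (0 : Fin m → ℂ) r,
      ∫ w in closedBall (0 : ℂ) r, f (Fin.cons w z) ≤
        ∫ w in closedBall (0 : ℂ) r, g (Fin.cons w z)) :
    ∫ z in closedBall 0 r, f z ≤ ∫ z in closedBall 0 r, g z := by
  have h := measurePreserving_finCons_restrict_closedBall (m := m) hr
  rw [setIntegral_closedBall_fin_succ hr hf, setIntegral_closedBall_fin_succ hr hg]
  exact setIntegral_mono_on
    ((h.integrable_comp_emb measurableEmbedding_finCons).2 hf).integral_prod_right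
    ((h.integrable_comp_emb measurableEmbedding_finCons).2 hg).integral_prod_right
    measurableSet_closedBall hfg

end Slicing

theorem integral_sq_factor_le_general
    (n : ℕ) (hn : 1 ≤ n) (k : ℕ)
    (s st : (Fin n → ℂ) → ℂ) (U : Set (Fin n → ℂ)) (hU : IsOpen U)
    (hP : {z : Fin n → ℂ | ∀ ℓ, ‖z ℓ‖ ≤ 2} ⊆ U)
    (hst : DifferentiableOn ℂ st U)
    (heq : ∀ z : Fin n → ℂ, s z = (z ⟨0, hn⟩) ^ k * st z) :
    ∫ z in {z : Fin n → ℂ | ∀ ℓ, ‖z ℓ‖ ≤ 2}, ‖st z‖ ^ 2 ≤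
      ((k + 1 : ℝ) / 2 ^ (2 * k)) *
        ∫ z in {z : Fin n → ℂ | ∀ ℓ, ‖z ℓ‖ ≤ 2}, ‖s z‖ ^ 2 := by
  obtain ⟨m, rfl⟩ : ∃ m, n = m + 1 := ⟨n - 1, by omega⟩
  rw [setOf_forall_norm_le_eq_closedBall zero_le_two] at hP ⊢
  have hs : s = fun z => z 0 ^ k * st z := funext heq
  have hst_cont : ContinuousOn st (closedBall 0 2) := hst.continuousOn.mono hP
  have hs_cont : ContinuousOn s (closedBall 0 2) := by
    rw [hs]; exact ((continuous_apply 0).pow k).continuousOn.mul hst_cont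
  have hint : ∀ g : (Fin (m + 1) → ℂ) → ℂ, ContinuousOn g (closedBall 0 2) →
      IntegrableOn (fun z => ‖g z‖ ^ 2) (closedBall 0 2) := fun g hg =>
    (hg.norm.pow 2).integrableOn_compact (isCompact_closedBall 0 2)
  rw [← integral_const_mul]
  refine setIntegral_closedBall_fin_succ_mono zero_le_two (hint st hst_cont)
    ((hint s hs_cont).const_mul _) fun z hz => ?_
  rw [integral_const_mul, hs]
  simp only [Fin.cons_zero]
  have hslice : Differentiable ℂ fun w : ℂ => (Fin.cons w z : Fin (m + 1) → ℂ) := by fun_prop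
  exact integral_closedBall_norm_sq_le two_pos (hU.preimage hslice.continuous)
    (fun w hw => hP ((Fin.cons_mem_closedBall_zero_iff zero_le_two w z).2 ⟨hw, hz⟩))
    (hst.comp hslice.differentiableOn fun _ hw => hw) k

/-- If `s, s̃` are holomorphic on a neighborhood of the closed polydisk `Δⁿ(0,2)` and
`s(z) = z₁^k s̃(z)`, then `∫_{Δⁿ(0,2)} |s̃|² dm ≤ ((k+1)/2^{2k}) ∫_{Δⁿ(0,2)} |s|² dm`. -/
theorem integral_sq_factor_le
    (n : ℕ) (hn : 1 ≤ n) (k : ℕ)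
    (s st : (Fin n → ℂ) → ℂ) (U : Set (Fin n → ℂ)) (hU : IsOpen U)
    (hP : {z : Fin n → ℂ | ∀ ℓ, ‖z ℓ‖ ≤ 2} ⊆ U)
    (hs : DifferentiableOn ℂ s U) (hst : DifferentiableOn ℂ st U)
    (heq : ∀ z : Fin n → ℂ, s z = (z ⟨0, hn⟩) ^ k * st z) :
    ∫ z in {z : Fin n → ℂ | ∀ ℓ, ‖z ℓ‖ ≤ 2}, ‖st z‖ ^ 2 ≤
      ((k + 1 : ℝ) / 2 ^ (2 * k)) *
        ∫ z in {z : Fin n → ℂ | ∀ ℓ, ‖z ℓ‖ ≤ 2}, ‖s z‖ ^ 2 :=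
  integral_sq_factor_le_general n hn k s st U hU hP hst heq
end

section
/- Let n ≥ 1, r > 0, and let λ₁,…,λₙ be nonnegative real numbers. Let s be a holomorphic function on an open neighborhood of the closed polydisk Δⁿ(0,r) = {z ∈ ℂⁿ : |z_ℓ| ≤ r for ℓ = 1,…,n}. Then |s(0)|² · ∫_{Δⁿ(0,r)} exp(−2 ∑_{ℓ=1}^{n} λ_ℓ |z_ℓ|²) dm(z) ≤ ∫_{Δⁿ(0,r)} |s(z)|² exp(−2 ∑_{ℓ=1}^{n} λ_ℓ |z_ℓ|²) dm(z). -/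
/-!
For `z` in the polydisk, `u ↦ s (u • z)` is holomorphic on the closed unit disk, so the mean value
property of `u ↦ s (u • z) ^ 2` bounds `‖s 0‖ ^ 2` by the mean of `‖s (e^{iθ} • z)‖ ^ 2` over `θ`.
Multiply by the weight, integrate over the polydisk and exchange the two integrals: the polydisk,
Lebesgue measure and the Gaussian weight are invariant under `z ↦ e^{iθ} • z`, so the inner
integral does not depend on `θ` and is the right-hand side.
-/

open MeasureTheory Metric Real Set

theorem Real.norm_circleAverage_le {E : Type*} [NormedAddCommGroup E] [NormedSpace ℝ E]
    (f : ℂ → E) (c : ℂ) (R : ℝ) :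
    ‖circleAverage f c R‖ ≤ circleAverage (fun z ↦ ‖f z‖) c R := by
  rw [circleAverage_def, circleAverage_def, norm_smul, smul_eq_mul, Real.norm_eq_abs,
    abs_of_pos (inv_pos.2 two_pi_pos)]
  gcongr
  exact intervalIntegral.norm_integral_le_integral_norm two_pi_pos.le

theorem DifferentiableOn.norm_pow_le_circleAverage {f : ℂ → ℂ} {c : ℂ} {R : ℝ}
    (hf : DifferentiableOn ℂ f (closedBall c |R|)) (p : ℕ) :
    ‖f c‖ ^ p ≤ circleAverage (fun z ↦ ‖f z‖ ^ p) c R := by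
  calc ‖f c‖ ^ p = ‖circleAverage (fun z ↦ f z ^ p) c R‖ := by
        rw [((hf.fun_pow p).diffContOnCl_ball subset_rfl).circleAverage, norm_pow]
    _ ≤ circleAverage (fun z ↦ ‖f z‖ ^ p) c R := by
        simpa only [norm_pow] using norm_circleAverage_le (fun z ↦ f z ^ p) c R

section

variable {X : Type*} [TopologicalSpace X] [T2Space X] [MeasurableSpace X] [OpensMeasurableSpace X]
  {μ : Measure X} [SFinite μ] [IsFiniteMeasureOnCompacts μ] {K : Set X}
  {G : Type*} [NormedAddCommGroup G] {F : ℂ → X → G} {c : ℂ} {R : ℝ}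

theorem integrable_circleMap_prod (hK : IsCompact K)
    (hF : ContinuousOn (Function.uncurry F) (sphere c |R| ×ˢ K)) :
    Integrable (fun q : X × ℝ ↦ F (circleMap c R q.2) q.1)
      ((μ.restrict K).prod (volume.restrict (Ioc 0 (2 * π)))) := by
  rw [Measure.prod_restrict]
  refine IntegrableOn.mono_set ?_ (prod_mono subset_rfl Ioc_subset_Icc_self)
  refine ContinuousOn.integrableOn_compact (hK.prod isCompact_Icc) ?_
  refine hF.comp (f := fun q : X × ℝ ↦ (circleMap c R q.2, q.1)) (by fun_prop) ?_
  exact fun q hq ↦ ⟨circleMap_mem_sphere' c R q.2, hq.1⟩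

variable [NormedSpace ℝ G]

theorem integrableOn_circleAverage (hK : IsCompact K)
    (hF : ContinuousOn (Function.uncurry F) (sphere c |R| ×ˢ K)) :
    IntegrableOn (fun z ↦ circleAverage (F · z) c R) K μ := by
  simp_rw [circleAverage_def, intervalIntegral.integral_of_le two_pi_pos.le]
  exact (integrable_circleMap_prod hK hF).integral_prod_left.smul _

theorem setIntegral_circleAverage_comm (hK : IsCompact K)
    (hF : ContinuousOn (Function.uncurry F) (sphere c |R| ×ˢ K)) :
    ∫ z in K, circleAverage (F · z) c R ∂μ = circleAverage (fun u ↦ ∫ z in K, F u z ∂μ) c R := by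
  simp_rw [circleAverage_def, intervalIntegral.integral_of_le two_pi_pos.le, integral_smul]
  exact congrArg _ (integral_integral_swap (integrable_circleMap_prod hK hF))

end

namespace Balanced

variable {E : Type*} [NormedAddCommGroup E] [NormedSpace ℂ E] {K : Set E}

theorem norm_pow_le_circleAverage_smul (hK : Balanced ℂ K) {g : E → ℂ}
    (hg : DifferentiableOn ℂ g K) {z : E} (hz : z ∈ K) (p : ℕ) :
    ‖g 0‖ ^ p ≤ circleAverage (fun u : ℂ ↦ ‖g (u • z)‖ ^ p) 0 1 := by
  have hdisk : MapsTo (· • z) (closedBall (0 : ℂ) |1|) K := fun u hu ↦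
    hK.smul_mem (by simpa using hu) hz
  simpa using (hg.comp (differentiableOn_id.smul_const z) hdisk).norm_pow_le_circleAverage p

variable [MeasurableSpace E] [BorelSpace E] {μ : Measure E}

theorem setIntegral_comp_smul (hK : Balanced ℂ K) {c : ℂ} (hc : ‖c‖ = 1)
    (hμ : MeasurePreserving (c • ·) μ μ) (F : E → ℝ) :
    ∫ z in K, F (c • z) ∂μ = ∫ z in K, F z ∂μ := by
  have hc0 : c ≠ 0 := norm_ne_zero_iff.1 (by simp [hc])
  have hpre : (c • ·) ⁻¹' K = K := by
    rw [preimage_smul₀ hc0, hK.smul_eq (by simp [hc])]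
  rw [← hμ.setIntegral_preimage_emb (Homeomorph.smulOfNeZero c hc0).measurableEmbedding F K, hpre]

theorem norm_pow_apply_zero_mul_setIntegral_le [SFinite μ] [IsFiniteMeasureOnCompacts μ]
    (hμ : ∀ c : ℂ, ‖c‖ = 1 → MeasurePreserving (c • ·) μ μ)
    (hKb : Balanced ℂ K) (hK : IsCompact K) {w : E → ℝ} (hwc : ContinuousOn w K)
    (hw0 : ∀ z ∈ K, 0 ≤ w z) (hw : ∀ c : ℂ, ‖c‖ = 1 → ∀ z ∈ K, w (c • z) = w z)
    {g : E → ℂ} (hg : DifferentiableOn ℂ g K) (p : ℕ) :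
    ‖g 0‖ ^ p * ∫ z in K, w z ∂μ ≤ ∫ z in K, ‖g z‖ ^ p * w z ∂μ := by
  set Φ : ℂ → E → ℝ := fun u z ↦ ‖g (u • z)‖ ^ p * w z
  have hsmul : MapsTo (fun q : ℂ × E ↦ q.1 • q.2) (sphere 0 |1| ×ˢ K) K := fun q hq ↦
    hKb.smul_mem (by simpa using hq.1.le) hq.2
  have hΦ : ContinuousOn (Function.uncurry Φ) (sphere 0 |1| ×ˢ K) :=
    ((hg.continuousOn.comp (by fun_prop) hsmul).norm.pow p).mul
      (hwc.comp continuousOn_snd fun q hq ↦ hq.2)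
  have hmean : ∀ z ∈ K, ‖g 0‖ ^ p * w z ≤ circleAverage (Φ · z) 0 1 := fun z hz ↦ by
    have hsplit :
        circleAverage (Φ · z) 0 1 = circleAverage (fun u ↦ ‖g (u • z)‖ ^ p) 0 1 * w z := by
      simpa [Φ, mul_comm _ (w z)] using
        circleAverage_fun_smul (a := w z) (f := fun u ↦ ‖g (u • z)‖ ^ p) (c := 0) (R := 1)
    rw [hsplit]
    exact mul_le_mul_of_nonneg_right (hKb.norm_pow_le_circleAverage_smul hg hz p) (hw0 z hz)
  have hrot : ∀ u ∈ sphere (0 : ℂ) |1|, ∫ z in K, Φ u z ∂μ = ∫ z in K, ‖g z‖ ^ p * w z ∂μ := by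
    intro u hu
    have hu : ‖u‖ = 1 := by simpa using hu
    refine (setIntegral_congr_fun hK.measurableSet fun z hz ↦ ?_).trans
      (hKb.setIntegral_comp_smul hu (hμ u hu) fun z ↦ ‖g z‖ ^ p * w z)
    simp only [Φ, hw u hu z hz]
  calc ‖g 0‖ ^ p * ∫ z in K, w z ∂μ = ∫ z in K, ‖g 0‖ ^ p * w z ∂μ :=
        (integral_const_mul _ _).symm
    _ ≤ ∫ z in K, circleAverage (Φ · z) 0 1 ∂μ :=
        setIntegral_mono_on ((hwc.integrableOn_compact hK).const_mul _)
          (integrableOn_circleAverage hK hΦ) hK.measurableSet hmean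
    _ = circleAverage (fun u ↦ ∫ z in K, Φ u z ∂μ) 0 1 := setIntegral_circleAverage_comm hK hΦ
    _ = ∫ z in K, ‖g z‖ ^ p * w z ∂μ := circleAverage_const_on_circle hrot

end Balanced

theorem volume_preserving_smul_of_norm_eq_one {ι : Type*} [Fintype ι] {c : ℂ} (hc : ‖c‖ = 1) :
    MeasurePreserving (c • · : (ι → ℂ) → ι → ℂ) :=
  volume_preserving_pi fun _ ↦ (rotation ⟨c, mem_sphere_zero_iff_norm.2 hc⟩).measurePreserving

section

variable {ι V : Type*} [NormedAddCommGroup V]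

theorem isCompact_setOf_forall_norm_le [Finite ι] [ProperSpace V] (r : ℝ) :
    IsCompact {z : ι → V | ∀ i, ‖z i‖ ≤ r} := by
  convert isCompact_univ_pi fun _ : ι ↦ isCompact_closedBall (0 : V) r using 1
  ext z
  simp

theorem balanced_setOf_forall_norm_le {𝕜 : Type*} [NormedField 𝕜] [NormedSpace 𝕜 V] (r : ℝ) :
    Balanced 𝕜 {z : ι → V | ∀ i, ‖z i‖ ≤ r} := by
  rintro a ha _ ⟨z, hz, rfl⟩ i
  calc ‖a • z i‖ = ‖a‖ * ‖z i‖ := norm_smul a (z i)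
    _ ≤ 1 * r := mul_le_mul ha (hz i) (norm_nonneg _) zero_le_one
    _ = r := one_mul r

end

theorem subaveraging_gaussian_polydisk_general (n : ℕ) (r : ℝ)
    (lam : Fin n → ℝ)
    (s : (Fin n → ℂ) → ℂ) (U : Set (Fin n → ℂ))
    (hP : {z : Fin n → ℂ | ∀ ℓ, ‖z ℓ‖ ≤ r} ⊆ U)
    (hs : DifferentiableOn ℂ s U) :
    ‖s 0‖ ^ 2 *
        ∫ z in {z : Fin n → ℂ | ∀ ℓ, ‖z ℓ‖ ≤ r},
          Real.exp (-2 * ∑ ℓ, lam ℓ * ‖z ℓ‖ ^ 2) ≤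
      ∫ z in {z : Fin n → ℂ | ∀ ℓ, ‖z ℓ‖ ≤ r},
        ‖s z‖ ^ 2 * Real.exp (-2 * ∑ ℓ, lam ℓ * ‖z ℓ‖ ^ 2) := by
  have hKb : Balanced ℂ {z : Fin n → ℂ | ∀ ℓ, ‖z ℓ‖ ≤ r} := balanced_setOf_forall_norm_le r
  have hK : IsCompact {z : Fin n → ℂ | ∀ ℓ, ‖z ℓ‖ ≤ r} := isCompact_setOf_forall_norm_le r
  refine Balanced.norm_pow_apply_zero_mul_setIntegral_le
    (fun _ hc ↦ volume_preserving_smul_of_norm_eq_one hc) hKb hK ?_ (fun _ _ ↦ (exp_pos _).le) ?_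
    (hs.mono hP) 2
  · fun_prop
  · intro c hc z _
    simp [hc]

/-- Sub-averaging inequality with Gaussian weight on a polydisk: for `s` holomorphic on a
neighborhood of `Δⁿ(0,r)` and `λ_ℓ ≥ 0`,
`|s(0)|² ∫_{Δⁿ(0,r)} e^{-2 ∑ λ_ℓ |z_ℓ|²} dm ≤ ∫_{Δⁿ(0,r)} |s|² e^{-2 ∑ λ_ℓ |z_ℓ|²} dm`. -/
theorem subaveraging_gaussian_polydisk (n : ℕ) (hn : 1 ≤ n) (r : ℝ) (hr : 0 < r)
    (lam : Fin n → ℝ) (hlam : ∀ ℓ, 0 ≤ lam ℓ)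
    (s : (Fin n → ℂ) → ℂ) (U : Set (Fin n → ℂ)) (hU : IsOpen U)
    (hP : {z : Fin n → ℂ | ∀ ℓ, ‖z ℓ‖ ≤ r} ⊆ U)
    (hs : DifferentiableOn ℂ s U) :
    ‖s 0‖ ^ 2 *
        ∫ z in {z : Fin n → ℂ | ∀ ℓ, ‖z ℓ‖ ≤ r},
          Real.exp (-2 * ∑ ℓ, lam ℓ * ‖z ℓ‖ ^ 2) ≤
      ∫ z in {z : Fin n → ℂ | ∀ ℓ, ‖z ℓ‖ ≤ r},
        ‖s z‖ ^ 2 * Real.exp (-2 * ∑ ℓ, lam ℓ * ‖z ℓ‖ ^ 2) :=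
  subaveraging_gaussian_polydisk_general n r lam s U hP hs
end
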